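/- arXiv:1307.0332 — 2 statements merged into one kernel-verified Lean document; each statement's English description precedes it below -/
import Mathlib

section
/- Let G = (N, E) be an unweighted graph, let i ≥ 1 be odd, and consider the graph G_i. Let S be a coalition in G_i with y_i ∉ S and {y_0, …, y_{i−1}} ⊆ S. Then y_i is pivotal for S in the matching game MG(G_i) if and only if the subgraph of G induced by S ∩ N admits a perfect matching. -/
attribute [local instance] Classical.propDecidable

/-- `M` is a matching of the subgraph of the graph with edge set `E` induced by
the vertex set `S`. -/
def IsMatchingOn {V : Type*} (E : Finset (Sym2 V)) (S : Finset V) (M : Finset (Sym2 V)) : Prop :=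
  M ⊆ E ∧ (∀ e ∈ M, ¬ e.IsDiag) ∧ (∀ e ∈ M, ∀ x ∈ e, x ∈ S) ∧
    (∀ e ∈ M, ∀ f ∈ M, e ≠ f → ∀ x ∈ e, x ∉ f)

/-- Value of a coalition `S` in the weighted matching game on the graph with edge set `E` and
weights `w`: the maximum total weight of a matching in the induced subgraph on `S`. -/
noncomputable def matchVal {V : Type*} (E : Finset (Sym2 V)) (w : Sym2 V → ℝ)
    (S : Finset V) : ℝ :=
  sSup {x : ℝ | ∃ M : Finset (Sym2 V), IsMatchingOn E S M ∧ x = ∑ e ∈ M, w e}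

/-- Value of a coalition `S` in the unweighted matching game: the maximum cardinality of a
matching in the induced subgraph on `S`. -/
noncomputable def umatchVal {V : Type*} (E : Finset (Sym2 V)) (S : Finset V) : ℕ :=
  sSup {k : ℕ | ∃ M : Finset (Sym2 V), IsMatchingOn E S M ∧ k = M.card}

/-- The Shapley value of player `i` in the cooperative game with (finite) player set `N` and
characteristic function `v`. -/
noncomputable def shapley {V : Type*} [DecidableEq V] (N : Finset V) (v : Finset V → ℝ)
    (i : V) : ℝ :=
  (1 / (Nat.factorial N.card) : ℝ) *
    ∑ S ∈ (N.erase i).powerset,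
      (Nat.factorial S.card : ℝ) * (Nat.factorial (N.card - S.card - 1) : ℝ) *
        (v (insert i S) - v S)

/-- The raw Shapley value of player `i` in the cooperative game with player set `N` and
characteristic function `v`. -/
noncomputable def rawShapley {V : Type*} [DecidableEq V] (N : Finset V) (v : Finset V → ℝ)
    (i : V) : ℝ :=
  ∑ S ∈ (N.erase i).powerset,
    (Nat.factorial S.card : ℝ) * (Nat.factorial (N.card - S.card - 1) : ℝ) *
      (v (insert i S) - v S)

/-- The subgraph induced by `S` of the graph with edge set `E` admits a perfect matching. -/
def PerfMatchable {V : Type*} (E : Finset (Sym2 V)) (S : Finset V) : Prop :=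
  ∃ M : Finset (Sym2 V), IsMatchingOn E S M ∧ ∀ x ∈ S, ∃ e ∈ M, x ∈ e

/-- Edge set of `G` viewed inside the vertex type `V ⊕ ℕ`, where `Sum.inr j` is the added
vertex `y_j`. -/
noncomputable def leftEdges {V : Type*} (E : Finset (Sym2 V)) : Finset (Sym2 (V ⊕ ℕ)) :=
  E.image (Sym2.map Sum.inl)

/-- Edge set of the graph `G_i`: the edges of `G`, edges from `y_0` to every vertex of `G`, and
the path edges `{y_{j-1}, y_j}` for `j = 1, …, i`. -/
noncomputable def GiEdges {V : Type*} [Fintype V] (E : Finset (Sym2 V)) (i : ℕ) : Finset (Sym2 (V ⊕ ℕ)) :=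
  leftEdges E ∪ Finset.univ.image (fun x : V => s(Sum.inr 0, Sum.inl x)) ∪
    (Finset.Icc 1 i).image (fun j : ℕ => s(Sum.inr (j - 1), Sum.inr j))

/-- Vertex (player) set of the graph `G_i`: the vertices of `G` together with `y_0, …, y_i`. -/
noncomputable def GiPlayers (V : Type*) [Fintype V] (i : ℕ) : Finset (V ⊕ ℕ) :=
  Finset.univ.image Sum.inl ∪ (Finset.range (i + 1)).image Sum.inr

/-!
Write `i = 2m + 1` and `ν` for the matching number of `G[S ∩ N]`. In `S ∪ {y_i}` the whole path
`y_0 … y_i` can be matched next to a maximum matching of `G[S ∩ N]`, and no matching does better,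
since every edge of `G_i` outside `G` meets one of the `m + 1` vertices `y_{2k}`; hence
`v(S ∪ {y_i}) = ν + m + 1`. In `S`, matching `y_1 … y_{2m}` along the path gives `v(S) ≥ ν + m`.
If `G[S ∩ N]` is perfectly matchable, `2 v(S) ≤ |S| = 2ν + 2m + 1` forces `v(S) = ν + m`;
otherwise a vertex exposed by a maximum matching can also be matched to `y_0`, so
`v(S) = ν + m + 1` and `y_i` is not pivotal.
-/

namespace IsMatchingOn

variable {V : Type*} {E E' : Finset (Sym2 V)} {S S' : Finset V} {M M' : Finset (Sym2 V)}

lemma empty (E : Finset (Sym2 V)) (S : Finset V) : IsMatchingOn E S ∅ := by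
  simp [IsMatchingOn]

lemma singleton {e : Sym2 V} (he : e ∈ E) (hd : ¬ e.IsDiag) (hS : ∀ x ∈ e, x ∈ S) :
    IsMatchingOn E S {e} := by
  simp_all [IsMatchingOn]

lemma mono (hM : IsMatchingOn E S M) (hE : E ⊆ E') (hS : S ⊆ S') : IsMatchingOn E' S' M :=
  ⟨hM.1.trans hE, hM.2.1, fun e he x hx => hS (hM.2.2.1 e he x hx), hM.2.2.2⟩

lemma of_subset (hM : IsMatchingOn E S M) (h : M' ⊆ M) : IsMatchingOn E S M' :=
  ⟨h.trans hM.1, fun e he => hM.2.1 e (h he), fun e he => hM.2.2.1 e (h he),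
    fun e he f hf => hM.2.2.2 e (h he) f (h hf)⟩

lemma union [DecidableEq V] (hM : IsMatchingOn E S M) (hM' : IsMatchingOn E S M')
    (hdisj : ∀ e ∈ M, ∀ f ∈ M', ∀ x ∈ e, x ∉ f) : IsMatchingOn E S (M ∪ M') := by
  refine ⟨Finset.union_subset hM.1 hM'.1, ?_, ?_, ?_⟩
  · simp only [Finset.mem_union]
    rintro e (he | he)
    exacts [hM.2.1 e he, hM'.2.1 e he]
  · simp only [Finset.mem_union]
    rintro e (he | he)
    exacts [hM.2.2.1 e he, hM'.2.2.1 e he]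
  · simp only [Finset.mem_union]
    rintro e (he | he) f (hf | hf) hef x hxe hxf
    · exact hM.2.2.2 e he f hf hef x hxe hxf
    · exact hdisj e he f hf x hxe hxf
    · exact hdisj f hf e he x hxf hxe
    · exact hM'.2.2.2 e he f hf hef x hxe hxf

lemma card_filter_mem_le_one (hM : IsMatchingOn E S M) (x : V) :
    (M.filter (x ∈ ·)).card ≤ 1 := by
  refine Finset.card_le_one.2 fun e he f hf => ?_
  rw [Finset.mem_filter] at he hf
  by_contra hef
  exact hM.2.2.2 e he.1 f hf.1 hef x he.2 hf.2

lemma card_le_of_forall_exists_mem (hM : IsMatchingOn E S M) {A : Finset V}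
    (hA : ∀ e ∈ M, ∃ a ∈ A, a ∈ e) : M.card ≤ A.card := by
  refine Finset.card_le_card_of_forall_subsingleton (fun e a => a ∈ e) hA fun a _ e he f hf => ?_
  by_contra hef
  exact hM.2.2.2 e he.1 f hf.1 hef a he.2 hf.2

lemma two_mul_card_le (hM : IsMatchingOn E S M) : 2 * M.card ≤ S.card := by
  rw [mul_comm, ← mul_one S.card]
  refine Finset.card_mul_le_card_mul (fun e x => x ∈ e) (fun e he => ?_)
    fun x _ => hM.card_filter_mem_le_one x
  induction e using Sym2.ind with
  | _ a b =>
    have hab : a ≠ b := by simpa using hM.2.1 _ he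
    have hsub : ({a, b} : Finset V) ⊆ S.bipartiteAbove (fun e x => x ∈ e) s(a, b) := by
      intro x hx
      have hx' : x ∈ s(a, b) := by simpa [Sym2.mem_iff] using hx
      exact Finset.mem_bipartiteAbove _ |>.2 ⟨hM.2.2.1 _ he x hx', hx'⟩
    simpa [Finset.card_pair hab] using Finset.card_le_card hsub

end IsMatchingOn

lemma card_le_two_mul_card_of_covers {V : Type*} {S : Finset V} {M : Finset (Sym2 V)}
    (hcov : ∀ x ∈ S, ∃ e ∈ M, x ∈ e) : S.card ≤ 2 * M.card := by
  rw [mul_comm, ← mul_one S.card]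
  refine Finset.card_mul_le_card_mul (fun x e => x ∈ e) (fun x hx => ?_) fun e _ => ?_
  · obtain ⟨e, he, hxe⟩ := hcov x hx
    exact Finset.card_pos.2 ⟨e, Finset.mem_bipartiteAbove _ |>.2 ⟨he, hxe⟩⟩
  · induction e using Sym2.ind with
    | _ a b =>
      refine (Finset.card_le_card fun x hx => ?_).trans (Finset.card_le_two (a := a) (b := b))
      simpa [Sym2.mem_iff] using (Finset.mem_bipartiteBelow _ |>.1 hx).2

lemma disjoint_of_vertexDisjoint {V : Type*} [DecidableEq V] {M M' : Finset (Sym2 V)}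
    (h : ∀ e ∈ M, ∀ f ∈ M', ∀ x ∈ e, x ∉ f) : Disjoint M M' :=
  Finset.disjoint_left.2 fun e he he' => h e he e he' _ e.out_fst_mem e.out_fst_mem

section umatchVal

variable {V : Type*} {E : Finset (Sym2 V)} {S : Finset V} {M : Finset (Sym2 V)}

lemma bddAbove_matching_cards (E : Finset (Sym2 V)) (S : Finset V) :
    BddAbove {k : ℕ | ∃ M, IsMatchingOn E S M ∧ k = M.card} :=
  ⟨E.card, fun _ ⟨_, hM, hk⟩ => hk ▸ Finset.card_le_card hM.1⟩

lemma IsMatchingOn.card_le_umatchVal (hM : IsMatchingOn E S M) : M.card ≤ umatchVal E S :=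
  le_csSup (bddAbove_matching_cards E S) ⟨M, hM, rfl⟩

lemma umatchVal_le {k : ℕ} (h : ∀ M, IsMatchingOn E S M → M.card ≤ k) : umatchVal E S ≤ k :=
  csSup_le ⟨0, ∅, .empty E S, rfl⟩ <| by rintro _ ⟨M, hM, rfl⟩; exact h M hM

lemma exists_isMatchingOn_card_eq_umatchVal (E : Finset (Sym2 V)) (S : Finset V) :
    ∃ M, IsMatchingOn E S M ∧ M.card = umatchVal E S := by
  obtain ⟨M, hM, h⟩ := Nat.sSup_mem (s := {k | ∃ M, IsMatchingOn E S M ∧ k = M.card})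
    ⟨0, ∅, .empty E S, rfl⟩ (bddAbove_matching_cards E S)
  exact ⟨M, hM, h.symm⟩

lemma two_mul_umatchVal_le (E : Finset (Sym2 V)) (S : Finset V) :
    2 * umatchVal E S ≤ S.card := by
  obtain ⟨M, hM, h⟩ := exists_isMatchingOn_card_eq_umatchVal E S
  exact h ▸ hM.two_mul_card_le

lemma PerfMatchable.card_le_two_mul_umatchVal (h : PerfMatchable E S) :
    S.card ≤ 2 * umatchVal E S := by
  obtain ⟨M, hM, hcov⟩ := h
  exact (card_le_two_mul_card_of_covers hcov).trans (by have := hM.card_le_umatchVal; omega)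

lemma exists_maximum_matching_of_not_perfMatchable (h : ¬ PerfMatchable E S) :
    ∃ M, IsMatchingOn E S M ∧ M.card = umatchVal E S ∧ ∃ x ∈ S, ∀ e ∈ M, x ∉ e := by
  obtain ⟨M, hM, hcard⟩ := exists_isMatchingOn_card_eq_umatchVal E S
  refine ⟨M, hM, hcard, ?_⟩
  by_contra! hcov
  exact h ⟨M, hM, hcov⟩

end umatchVal

section Gi

variable {V : Type*} {E : Finset (Sym2 V)} {i : ℕ} {T : Finset (V ⊕ ℕ)}
  {ML : Finset (Sym2 (V ⊕ ℕ))}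

lemma isLeft_of_mem_leftEdges {e : Sym2 (V ⊕ ℕ)} (he : e ∈ leftEdges E) {x : V ⊕ ℕ}
    (hx : x ∈ e) : x.isLeft := by
  obtain ⟨e, -, rfl⟩ := Finset.mem_image.1 he
  induction e using Sym2.ind with
  | _ a b => rcases Sym2.mem_iff.1 hx with rfl | rfl <;> rfl

lemma IsMatchingOn.filter_isLeft {E' : Finset (Sym2 (V ⊕ ℕ))} {M : Finset (Sym2 (V ⊕ ℕ))}
    (hM : IsMatchingOn E' T M) (hle : M ⊆ leftEdges E) :
    IsMatchingOn (leftEdges E) (T.filter fun x => x.isLeft) M :=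
  ⟨hle, hM.2.1, fun e he x hx => Finset.mem_filter.2 ⟨hM.2.2.1 e he x hx,
    isLeft_of_mem_leftEdges (hle he) hx⟩, hM.2.2.2⟩

section Fintype

variable [Fintype V]

lemma mem_GiEdges {e : Sym2 (V ⊕ ℕ)} :
    e ∈ GiEdges E i ↔ e ∈ leftEdges E ∨ (∃ x : V, e = s(Sum.inr 0, Sum.inl x)) ∨
      ∃ j, 1 ≤ j ∧ j ≤ i ∧ e = s(Sum.inr (j - 1), Sum.inr j) := by
  simp only [GiEdges, Finset.mem_union, Finset.mem_image, Finset.mem_univ, true_and,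
    Finset.mem_Icc, and_assoc, or_assoc, eq_comm]

lemma leftEdges_subset_GiEdges : leftEdges E ⊆ GiEdges E i :=
  fun _ he => mem_GiEdges.2 (Or.inl he)

lemma exists_even_mem_of_mem_GiEdges {e : Sym2 (V ⊕ ℕ)} (he : e ∈ GiEdges E i)
    (hl : e ∉ leftEdges E) : ∃ k < i / 2 + 1, Sum.inr (2 * k) ∈ e := by
  rcases mem_GiEdges.1 he with h | ⟨x, rfl⟩ | ⟨j, h1, h2, rfl⟩
  · exact absurd h hl
  · exact ⟨0, by omega, by simp⟩
  · rcases Nat.even_or_odd' j with ⟨k, rfl | rfl⟩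
    · exact ⟨k, by omega, by simp⟩
    · exact ⟨k, by omega, by simp⟩

lemma umatchVal_GiEdges_le (T : Finset (V ⊕ ℕ)) :
    umatchVal (GiEdges E i) T ≤
      umatchVal (leftEdges E) (T.filter fun x => x.isLeft) + (i / 2 + 1) := by
  refine umatchVal_le fun M hM => ?_
  have hleft : (M.filter (· ∈ leftEdges E)).card ≤
      umatchVal (leftEdges E) (T.filter fun x => x.isLeft) :=
    ((hM.of_subset (Finset.filter_subset _ _)).filter_isLeft
      fun e he => (Finset.mem_filter.1 he).2).card_le_umatchVal
  have hrest : (M.filter (· ∉ leftEdges E)).card ≤ i / 2 + 1 := by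
    refine ((hM.of_subset (Finset.filter_subset _ _)).card_le_of_forall_exists_mem
      (A := (Finset.range (i / 2 + 1)).image fun k => Sum.inr (2 * k)) fun e he => ?_).trans
        (Finset.card_image_le.trans (Finset.card_range _).le)
    obtain ⟨he, hl⟩ := Finset.mem_filter.1 he
    obtain ⟨k, hk, hke⟩ := exists_even_mem_of_mem_GiEdges (hM.1 he) hl
    exact ⟨_, Finset.mem_image_of_mem _ (Finset.mem_range.2 hk), hke⟩
  rw [← Finset.card_filter_add_card_filter_not (s := M) (· ∈ leftEdges E)]
  omega

end Fintype

variable (V) in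
noncomputable def pathMatching (a b : ℕ) : Finset (Sym2 (V ⊕ ℕ)) :=
  (Finset.range b).image fun k => s(Sum.inr (a + 2 * k), Sum.inr (a + 2 * k + 1))

lemma card_pathMatching (a b : ℕ) : (pathMatching V a b).card = b := by
  rw [pathMatching, Finset.card_image_of_injective, Finset.card_range]
  intro k k' h
  simp only [Sym2.eq_iff, Sum.inr.injEq] at h
  omega

lemma exists_eq_inr_of_mem_pathMatching {a b : ℕ} {e : Sym2 (V ⊕ ℕ)}
    (he : e ∈ pathMatching V a b) {x : V ⊕ ℕ} (hx : x ∈ e) :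
    ∃ j, a ≤ j ∧ j < a + 2 * b ∧ x = Sum.inr j := by
  obtain ⟨k, hk, rfl⟩ := Finset.mem_image.1 he
  rw [Finset.mem_range] at hk
  rcases Sym2.mem_iff.1 hx with rfl | rfl
  exacts [⟨_, by omega, by omega, rfl⟩, ⟨_, by omega, by omega, rfl⟩]

lemma isMatchingOn_pathMatching [Fintype V] {a b : ℕ} (hab : a + 2 * b ≤ i + 1)
    (hT : ∀ j, a ≤ j → j < a + 2 * b → Sum.inr j ∈ T) :
    IsMatchingOn (GiEdges E i) T (pathMatching V a b) := by
  refine ⟨fun e he => ?_, fun e he => ?_, fun e he x hx => ?_, fun e he f hf hef x hxe hxf => ?_⟩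
  · obtain ⟨k, hk, rfl⟩ := Finset.mem_image.1 he
    rw [Finset.mem_range] at hk
    exact mem_GiEdges.2 (Or.inr (Or.inr ⟨a + 2 * k + 1, by omega, by omega, by simp⟩))
  · obtain ⟨k, -, rfl⟩ := Finset.mem_image.1 he
    simp
  · obtain ⟨j, hj₁, hj₂, rfl⟩ := exists_eq_inr_of_mem_pathMatching he hx
    exact hT j hj₁ hj₂
  · obtain ⟨k, -, rfl⟩ := Finset.mem_image.1 he
    obtain ⟨k', -, rfl⟩ := Finset.mem_image.1 hf
    have hkk : k ≠ k' := by rintro rfl; exact hef rfl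
    simp only [Sym2.mem_iff] at hxe hxf
    rcases hxe with rfl | rfl <;> rcases hxf with h | h <;>
      (simp only [Sum.inr.injEq] at h; omega)

lemma vertexDisjoint_leftEdges_pathMatching (hML : ML ⊆ leftEdges E) (a b : ℕ) :
    ∀ e ∈ ML, ∀ f ∈ pathMatching V a b, ∀ x ∈ e, x ∉ f := by
  intro e he f hf x hxe hxf
  obtain ⟨j, -, -, rfl⟩ := exists_eq_inr_of_mem_pathMatching hf hxf
  simpa using isLeft_of_mem_leftEdges (hML he) hxe

lemma IsMatchingOn.union_pathMatching [Fintype V] [DecidableEq V] {a b : ℕ}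
    (hML : IsMatchingOn (leftEdges E) (T.filter fun x => x.isLeft) ML)
    (hab : a + 2 * b ≤ i + 1) (hT : ∀ j, a ≤ j → j < a + 2 * b → Sum.inr j ∈ T) :
    IsMatchingOn (GiEdges E i) T (ML ∪ pathMatching V a b) :=
  (hML.mono leftEdges_subset_GiEdges (Finset.filter_subset _ _)).union
    (isMatchingOn_pathMatching hab hT) (vertexDisjoint_leftEdges_pathMatching hML.1 a b)

lemma card_union_pathMatching [DecidableEq V] (hML : ML ⊆ leftEdges E) (a b : ℕ) :
    (ML ∪ pathMatching V a b).card = ML.card + b := by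
  rw [Finset.card_union_of_disjoint (disjoint_of_vertexDisjoint
    (vertexDisjoint_leftEdges_pathMatching hML a b)), card_pathMatching]

lemma umatchVal_leftEdges_add_le [Fintype V] [DecidableEq V] {a b : ℕ} (hab : a + 2 * b ≤ i + 1)
    (hT : ∀ j, a ≤ j → j < a + 2 * b → Sum.inr j ∈ T) :
    umatchVal (leftEdges E) (T.filter fun x => x.isLeft) + b ≤ umatchVal (GiEdges E i) T := by
  obtain ⟨ML, hML, hcard⟩ :=
    exists_isMatchingOn_card_eq_umatchVal (leftEdges E) (T.filter fun x => x.isLeft)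
  rw [← hcard, ← card_union_pathMatching hML.1]
  exact (hML.union_pathMatching hab hT).card_le_umatchVal

/-- A vertex of `G` left exposed by a maximum matching can be matched to `y_0`, leaving
`y_1, …, y_{2b}` to be matched along the path. -/
lemma umatchVal_leftEdges_add_lt_of_not_perfMatchable [Fintype V] [DecidableEq V] {b : ℕ}
    (hpm : ¬ PerfMatchable (leftEdges E) (T.filter fun x => x.isLeft)) (hb : 2 * b ≤ i)
    (hT : ∀ j < 1 + 2 * b, Sum.inr j ∈ T) :
    umatchVal (leftEdges E) (T.filter fun x => x.isLeft) + b < umatchVal (GiEdges E i) T := by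
  obtain ⟨ML, hML, hcard, x, hxT, hxML⟩ := exists_maximum_matching_of_not_perfMatchable hpm
  obtain ⟨hxT, hx⟩ := Finset.mem_filter.1 hxT
  obtain ⟨v, rfl⟩ := Sum.isLeft_iff.1 hx
  have hM := hML.union_pathMatching (i := i) (a := 1) (b := b) (by omega) fun j _ hj => hT j hj
  have hy : IsMatchingOn (GiEdges E i) T {s(Sum.inr 0, Sum.inl v)} :=
    .singleton (mem_GiEdges.2 (Or.inr (Or.inl ⟨v, rfl⟩))) (by simp)
      (by simpa [Sym2.mem_iff] using ⟨hT 0 (by omega), hxT⟩)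
  have hdisj : ∀ e ∈ ML ∪ pathMatching V 1 b,
      ∀ f ∈ ({s(Sum.inr 0, Sum.inl v)} : Finset (Sym2 (V ⊕ ℕ))), ∀ y ∈ e, y ∉ f := by
    intro e he f hf y hye hyf
    rw [Finset.mem_singleton.1 hf, Sym2.mem_iff] at hyf
    rcases Finset.mem_union.1 he with he | he
    · rcases hyf with rfl | rfl
      exacts [by simpa using isLeft_of_mem_leftEdges (hML.1 he) hye, hxML e he hye]
    · obtain ⟨j, hj, -, rfl⟩ := exists_eq_inr_of_mem_pathMatching he hye
      rcases hyf with h | h <;> simp only [Sum.inr.injEq, reduceCtorEq] at h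
      omega
  have hcard' := (hM.union hy hdisj).card_le_umatchVal
  rw [Finset.card_union_of_disjoint (disjoint_of_vertexDisjoint hdisj),
    card_union_pathMatching hML.1, Finset.card_singleton, hcard] at hcard'
  omega

lemma card_eq_card_filter_isLeft_add [Fintype V] {S : Finset (V ⊕ ℕ)} (hS : S ⊆ GiPlayers V i)
    (hyi : Sum.inr i ∉ S) (hys : ∀ j < i, Sum.inr j ∈ S) :
    S.card = (S.filter fun x => x.isLeft).card + i := by
  have hright : (S.filter fun x => ¬ x.isLeft) = (Finset.range i).image Sum.inr := by
    ext (v | j)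
    · simp
    · simp only [Finset.mem_filter, Sum.isLeft_inr, Finset.mem_image, Finset.mem_range,
        Sum.inr.injEq, exists_eq_right]
      refine ⟨fun ⟨hj, _⟩ => ?_, fun hj => ⟨hys j hj, by simp⟩⟩
      have hji : j ≠ i := by rintro rfl; exact hyi hj
      have := hS hj
      simp [GiPlayers] at this
      omega
  rw [← Finset.card_filter_add_card_filter_not (s := S) fun x => x.isLeft, hright,
    Finset.card_image_of_injective _ Sum.inr_injective, Finset.card_range]

end Gi

theorem pivotal_Gi_odd_general {V : Type*} [Fintype V] [DecidableEq V]
    (E : Finset (Sym2 V))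
    (i : ℕ) (hi : Odd i)
    (S : Finset (V ⊕ ℕ)) (hS : S ⊆ GiPlayers V i)
    (hyi : Sum.inr i ∉ S) (hys : ∀ j < i, Sum.inr j ∈ S) :
    (umatchVal (GiEdges E i) (insert (Sum.inr i) S) = umatchVal (GiEdges E i) S + 1) ↔
      PerfMatchable (leftEdges E) (S.filter (fun x => x.isLeft)) := by
  obtain ⟨m, rfl⟩ := hi
  have hfilter : ((insert (Sum.inr (2 * m + 1)) S).filter fun x => x.isLeft) =
      S.filter fun x => x.isLeft := by
    simp [Finset.filter_insert]
  have hins_le := umatchVal_GiEdges_le (E := E) (i := 2 * m + 1) (insert (Sum.inr (2 * m + 1)) S)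
  have hins_ge := umatchVal_leftEdges_add_le (E := E) (i := 2 * m + 1) (a := 0) (b := m + 1)
    (T := insert (Sum.inr (2 * m + 1)) S) (by omega) fun j _ hj => by
      rcases Nat.lt_or_ge j (2 * m + 1) with h | h
      · exact Finset.mem_insert_of_mem (hys j h)
      · rw [show j = 2 * m + 1 by omega]; exact Finset.mem_insert_self _ _
  rw [hfilter, show (2 * m + 1) / 2 = m by omega] at hins_le
  rw [hfilter] at hins_ge
  have hS_ge := umatchVal_leftEdges_add_le (E := E) (i := 2 * m + 1) (a := 1) (b := m)
    (by omega) fun j _ hj => hys j (by omega)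
  constructor
  · intro hpiv
    by_contra hpm
    have := umatchVal_leftEdges_add_lt_of_not_perfMatchable (i := 2 * m + 1) (b := m) hpm
      (by omega) fun j hj => hys j (by omega)
    omega
  · intro hpm
    have hcard := card_eq_card_filter_isLeft_add hS hyi hys
    have := two_mul_umatchVal_le (GiEdges E (2 * m + 1)) S
    have := hpm.card_le_two_mul_umatchVal
    omega

/-- For odd `i`, a coalition `S` of `G_i` containing `y_0, …, y_{i-1}` but not
`y_i` is pivotal for `y_i` iff the subgraph of `G` induced by `S ∩ N` is perfectly matchable. -/
theorem pivotal_Gi_odd {V : Type*} [Fintype V] [DecidableEq V]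
    (E : Finset (Sym2 V)) (hloop : ∀ e ∈ E, ¬ e.IsDiag)
    (i : ℕ) (hi : Odd i)
    (S : Finset (V ⊕ ℕ)) (hS : S ⊆ GiPlayers V i)
    (hyi : Sum.inr i ∉ S) (hys : ∀ j < i, Sum.inr j ∈ S) :
    (umatchVal (GiEdges E i) (insert (Sum.inr i) S) = umatchVal (GiEdges E i) S + 1) ↔
      PerfMatchable (leftEdges E) (S.filter (fun x => x.isLeft)) :=
  pivotal_Gi_odd_general E i hi S hS hyi hys
end

section
/- Let G = (N, E, w) be a weighted graph with nonnegative edge weights and n = |N| ≥ 2 vertices, let v be the characteristic function of the matching game MG(G), and let i ∈ N be a vertex with at least one incident edge of positive weight, so that κ_i = κ_i(N, v) > 0. Fix ε > 0, let m = ⌈4 n² (n−1)² / ε²⌉, let σ_1, …, σ_m be independent permutations of N each chosen uniformly at random, and let κ̄_i = (1/m) · Σ_{j=1}^{m} n! · (v(p(i, σ_j) ∪ {i}) − v(p(i, σ_j))). Then Pr[|κ̄_i − κ_i| ≥ ε · κ_i] ≤ 1/4. -/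
attribute [local instance] Classical.propDecidable

/-- The set `p(i, σ)` of players occurring before `i` in the permutation `σ`. -/
def before {n : ℕ} (i : Fin n) (σ : Equiv.Perm (Fin n)) : Finset (Fin n) :=
  Finset.univ.filter (fun j => σ.symm j < σ.symm i)

/-!
A uniformly random permutation `σ` gives an unbiased estimate `n! (v(p(i,σ) ∪ {i}) - v(p(i,σ)))`
of `κ_i`, because exactly `|S|! (n-1-|S|)!` permutations have `p(i,σ) = S`. A marginal
contribution of `i` is at most the largest weight `W` of an edge `{i, j}` at `i`, while the single
coalition `{j}` already gives `κ_i ≥ (n-2)! W`. So every sample lies in `[0, n (n-1) κ_i]` and has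
variance at most `n (n-1) κ_i²`, and Chebyshev's inequality for the mean of `m` independent samples
bounds the failure probability by `n (n-1) / (m ε²) ≤ 1 / (4 n (n-1))`.
-/

open Finset
open scoped Nat BigOperators

section Matching

variable {V : Type*} {E : Finset (Sym2 V)} {S T : Finset V} {M : Finset (Sym2 V)}

lemma isMatchingOn_empty (E : Finset (Sym2 V)) (S : Finset V) : IsMatchingOn E S ∅ := by
  simp [IsMatchingOn]

lemma IsMatchingOn.mono_s18 (hM : IsMatchingOn E S M) (hST : S ⊆ T) : IsMatchingOn E T M :=
  ⟨hM.1, hM.2.1, fun e he x hx => hST (hM.2.2.1 e he x hx), hM.2.2.2⟩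

lemma IsMatchingOn.filter_notMem [DecidableEq V] {i : V} (hM : IsMatchingOn E (insert i S) M) :
    IsMatchingOn E S (M.filter (i ∉ ·)) := by
  refine ⟨(filter_subset _ _).trans hM.1, fun e he => hM.2.1 e (mem_of_mem_filter e he), ?_,
    fun e he f hf => hM.2.2.2 e (mem_of_mem_filter e he) f (mem_of_mem_filter f hf)⟩
  intro e he x hx
  rw [mem_filter] at he
  exact (mem_insert.1 (hM.2.2.1 e he.1 x hx)).resolve_left (by rintro rfl; exact he.2 hx)

lemma IsMatchingOn.card_filter_mem_le_one_s18 [DecidableEq V] (hM : IsMatchingOn E S M) (i : V) :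
    #(M.filter (i ∈ ·)) ≤ 1 := by
  refine card_le_one.2 fun e he f hf => ?_
  rw [mem_filter] at he hf
  by_contra hef
  exact hM.2.2.2 e he.1 f hf.1 hef i he.2 hf.2

lemma IsMatchingOn.eq_empty_of_card_le_one (hM : IsMatchingOn E S M) (hS : #S ≤ 1) : M = ∅ := by
  refine eq_empty_of_forall_notMem fun e he => hM.2.1 e he ?_
  induction e using Sym2.ind with
  | h x y =>
    exact Sym2.mk_isDiag_iff.2 <| card_le_one.1 hS x (hM.2.2.1 _ he x (Sym2.mem_mk_left x y)) y
      (hM.2.2.1 _ he y (Sym2.mem_mk_right x y))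

variable (E) (w : Sym2 V → ℝ)

lemma finite_matching_weights (S : Finset V) :
    {x : ℝ | ∃ M : Finset (Sym2 V), IsMatchingOn E S M ∧ x = ∑ e ∈ M, w e}.Finite := by
  classical
  refine (E.powerset.image fun M => ∑ e ∈ M, w e).finite_toSet.subset ?_
  rintro x ⟨M, hM, rfl⟩
  exact mem_image.2 ⟨M, mem_powerset.2 hM.1, rfl⟩

lemma sum_le_matchVal (hM : IsMatchingOn E S M) : ∑ e ∈ M, w e ≤ matchVal E w S :=
  le_csSup (finite_matching_weights E w S).bddAbove ⟨M, hM, rfl⟩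

lemma exists_isMatchingOn_matchVal_eq (S : Finset V) :
    ∃ M, IsMatchingOn E S M ∧ matchVal E w S = ∑ e ∈ M, w e := by
  have hne : {x : ℝ | ∃ M : Finset (Sym2 V), IsMatchingOn E S M ∧ x = ∑ e ∈ M, w e}.Nonempty :=
    ⟨0, ∅, isMatchingOn_empty E S, by simp⟩
  exact hne.csSup_mem (finite_matching_weights E w S)

lemma matchVal_mono (hST : S ⊆ T) : matchVal E w S ≤ matchVal E w T := by
  obtain ⟨M, hM, hS⟩ := exists_isMatchingOn_matchVal_eq E w S
  exact hS ▸ sum_le_matchVal E w (hM.mono_s18 hST)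

lemma matchVal_singleton (j : V) : matchVal E w {j} = 0 := by
  obtain ⟨M, hM, h⟩ := exists_isMatchingOn_matchVal_eq E w {j}
  rw [h, hM.eq_empty_of_card_le_one (card_singleton j).le, sum_empty]

lemma le_matchVal_pair [DecidableEq V] {i j : V} (hij : i ≠ j) (he : s(i, j) ∈ E) :
    w s(i, j) ≤ matchVal E w {i, j} := by
  have hM : IsMatchingOn E {i, j} {s(i, j)} := by
    refine ⟨singleton_subset_iff.2 he, ?_, ?_, ?_⟩ <;> simp_all [Sym2.mem_iff]
  simpa using sum_le_matchVal E w hM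

lemma matchVal_insert_sub_le [DecidableEq V] {i : V} {W : ℝ} (hW0 : 0 ≤ W)
    (hW : ∀ e ∈ E, i ∈ e → w e ≤ W) (S : Finset V) :
    matchVal E w (insert i S) - matchVal E w S ≤ W := by
  obtain ⟨M, hM, h⟩ := exists_isMatchingOn_matchVal_eq E w (insert i S)
  have hI : ∑ e ∈ M.filter (i ∈ ·), w e ≤ W :=
    calc ∑ e ∈ M.filter (i ∈ ·), w e ≤ #(M.filter (i ∈ ·)) • W :=
          sum_le_card_nsmul _ _ _ fun e he =>
            hW e (hM.1 (mem_of_mem_filter e he)) (mem_filter.1 he).2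
      _ ≤ W := by
          rw [nsmul_eq_mul]
          exact mul_le_of_le_one_left hW0 (by exact_mod_cast (hM.card_filter_mem_le_one_s18 i))
  have hO := sum_le_matchVal E w hM.filter_notMem
  rw [h, ← sum_filter_add_sum_filter_not M (i ∈ ·)]
  linarith

lemma exists_max_weight_incident {V : Type*} {E : Finset (Sym2 V)} (w : Sym2 V → ℝ)
    (hloop : ∀ e ∈ E, ¬ e.IsDiag) {i : V} (hinc : ∃ e ∈ E, i ∈ e ∧ 0 < w e) :
    ∃ j, i ≠ j ∧ s(i, j) ∈ E ∧ 0 < w s(i, j) ∧ ∀ e ∈ E, i ∈ e → w e ≤ w s(i, j) := by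
  classical
  obtain ⟨e, he, hie, hpos⟩ := hinc
  obtain ⟨e₀, he₀, hmax⟩ := exists_max_image (E.filter (i ∈ ·)) w ⟨e, mem_filter.2 ⟨he, hie⟩⟩
  rw [mem_filter] at he₀
  refine ⟨Sym2.Mem.other he₀.2, ?_⟩
  rw [Sym2.other_spec he₀.2]
  refine ⟨fun hij => hloop e₀ he₀.1 ?_, he₀.1, hpos.trans_le (hmax e (mem_filter.2 ⟨he, hie⟩)),
    fun e' he' hie' => hmax e' (mem_filter.2 ⟨he', hie'⟩)⟩
  rw [← Sym2.other_spec he₀.2, ← hij]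
  exact Sym2.mk_isDiag_iff.2 rfl

end Matching

section Shapley

variable {V : Type*} [DecidableEq V]

lemma term_le_rawShapley {N : Finset V} {v : Finset V → ℝ} {i : V}
    (hv : ∀ S, v S ≤ v (insert i S)) {S : Finset V} (hS : S ⊆ N.erase i) :
    ((#S)! : ℝ) * ((#N - #S - 1)! : ℝ) * (v (insert i S) - v S) ≤ rawShapley N v i :=
  single_le_sum (f := fun S => ((#S)! : ℝ) * ((#N - #S - 1)! : ℝ) * (v (insert i S) - v S))
    (fun S _ => mul_nonneg (by positivity) (sub_nonneg.2 (hv S))) (mem_powerset.2 hS)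

lemma factorial_mul_le_rawShapley_matchVal {E : Finset (Sym2 V)} (w : Sym2 V → ℝ)
    {N : Finset V} {i j : V} (hj : j ∈ N) (hij : i ≠ j) (he : s(i, j) ∈ E) :
    ((#N - 2)! : ℝ) * w s(i, j) ≤ rawShapley N (matchVal E w) i := by
  have hterm := term_le_rawShapley (N := N) (v := matchVal E w)
    (fun S => matchVal_mono E w (subset_insert i S))
    (singleton_subset_iff.2 (mem_erase.2 ⟨hij.symm, hj⟩))
  rw [card_singleton, Nat.factorial_one, Nat.cast_one, one_mul, Nat.sub_sub, matchVal_singleton,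
    sub_zero] at hterm
  exact (mul_le_mul_of_nonneg_left (le_matchVal_pair E w hij he) (by positivity)).trans hterm

end Shapley

lemma card_perm_comp_eq {α ι : Type*} [Fintype α] [DecidableEq α] [Fintype ι] [DecidableEq ι]
    (f g : α → ι) (hfg : ∀ b, Fintype.card {a // g a = b} = Fintype.card {a // f a = b}) :
    Fintype.card {σ : Equiv.Perm α // f ∘ σ = g} = ∏ b, (Fintype.card {a // f a = b})! := by
  -- carries each fibre of `g` onto the corresponding fibre of `f`
  let σ₀ : Equiv.Perm α := (Equiv.sigmaFiberEquiv g).symm.trans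
    ((Equiv.sigmaCongrRight fun b => Fintype.equivOfCardEq (hfg b)).trans (Equiv.sigmaFiberEquiv f))
  have hσ₀ : f ∘ σ₀ = g := funext fun a => (Fintype.equivOfCardEq (hfg (g a)) ⟨a, rfl⟩).2
  rw [← DomMulAct.stabilizer_card f]
  refine Fintype.card_congr ((Equiv.mulRight σ₀⁻¹).subtypeEquiv fun σ => ?_)
  constructor
  · rintro h
    funext a
    simpa [← h] using (congrFun hσ₀ (σ₀⁻¹ a)).symm
  · rintro h
    funext a
    simpa [← hσ₀] using congrFun h (σ₀ a)

section Before

variable {n : ℕ}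

lemma before_eq_map (i : Fin n) (σ : Equiv.Perm (Fin n)) :
    before i σ = (Iio (σ.symm i)).map σ.toEmbedding := by
  ext a
  simp [before, mem_map_equiv]

lemma card_before (i : Fin n) (σ : Equiv.Perm (Fin n)) : #(before i σ) = σ.symm i := by
  rw [before_eq_map, card_map, Fin.card_Iio]

/-- The value of `compare (σ.symm a) (σ.symm i)` for every `σ` with `before i σ = S`. -/
def positionClass (i : Fin n) (S : Finset (Fin n)) (a : Fin n) : Ordering :=
  if a ∈ S then .lt else if a = i then .eq else .gt

lemma before_eq_iff_positionClass_comp {i : Fin n} {S : Finset (Fin n)} (hi : i ∉ S)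
    (hS : #S < n) (σ : Equiv.Perm (Fin n)) :
    before i σ = S ↔ positionClass i S ∘ σ = fun x => compare x ⟨#S, hS⟩ := by
  constructor
  · rintro rfl
    funext x
    rw [show (⟨#(before i σ), hS⟩ : Fin n) = σ.symm i from Fin.ext (card_before i σ)]
    simp only [Function.comp_apply, positionClass, before, mem_filter, mem_univ, true_and,
      Equiv.symm_apply_apply, ← Equiv.eq_symm_apply]
    split_ifs with hlt heq
    · exact (compare_lt_iff_lt.2 hlt).symm
    · exact (compare_eq_iff_eq.2 heq).symm
    · exact (compare_gt_iff_gt.2 (lt_of_le_of_ne (not_lt.1 hlt) (Ne.symm heq))).symm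
  · intro h
    have hcls : ∀ a, positionClass i S a = compare (σ.symm a) ⟨#S, hS⟩ := fun a => by
      simpa using congrFun h (σ.symm a)
    have hpos : σ.symm i = ⟨#S, hS⟩ :=
      compare_eq_iff_eq.1 (by rw [← hcls]; simp [positionClass, hi])
    ext a
    simp only [before, mem_filter, mem_univ, true_and, hpos, ← compare_lt_iff_lt, ← hcls,
      positionClass]
    split_ifs <;> simp_all

def compareCount (n k : ℕ) : Ordering → ℕ
  | .lt => k
  | .eq => 1
  | .gt => n - 1 - k

lemma card_compare_eq_compareCount (k : Fin n) (b : Ordering) :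
    Fintype.card {x // compare x k = b} = compareCount n k b := by
  rw [Fintype.card_subtype]
  cases b
  · rw [show ({x | compare x k = .lt} : Finset _) = Iio k by ext; simp [compare_lt_iff_lt],
      Fin.card_Iio, compareCount]
  · rw [show ({x | compare x k = .eq} : Finset _) = {k} by ext; simp, card_singleton, compareCount]
  · rw [show ({x | compare x k = .gt} : Finset _) = Ioi k by ext; simp [compare_gt_iff_gt],
      Fin.card_Ioi, compareCount]

lemma card_positionClass_eq_compareCount {i : Fin n} {S : Finset (Fin n)} (hi : i ∉ S)
    (b : Ordering) : Fintype.card {a // positionClass i S a = b} = compareCount n #S b := by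
  rw [Fintype.card_subtype]
  cases b
  · rw [show ({a | positionClass i S a = .lt} : Finset _) = S by
      ext a; by_cases a ∈ S <;> simp_all [positionClass], compareCount]
  · rw [show ({a | positionClass i S a = .eq} : Finset _) = {i} by
      ext a
      by_cases ha : a ∈ S
      · simp [positionClass, ha, ne_of_mem_of_not_mem ha hi]
      · simp [positionClass, ha], card_singleton, compareCount]
  · rw [show ({a | positionClass i S a = .gt} : Finset _) = (insert i S)ᶜ by
      ext a; by_cases a ∈ S <;> simp_all [positionClass], card_compl, card_insert_of_notMem hi,
      Fintype.card_fin, compareCount]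
    omega

lemma card_filter_before_eq {i : Fin n} {S : Finset (Fin n)} (hi : i ∉ S) :
    #{σ : Equiv.Perm (Fin n) | before i σ = S} = (#S)! * (n - 1 - #S)! := by
  have hS : #S < n := by
    have := card_le_univ (insert i S)
    rw [card_insert_of_notMem hi, Fintype.card_fin] at this
    omega
  rw [← Fintype.card_subtype,
    Fintype.card_congr (Equiv.subtypeEquivRight (before_eq_iff_positionClass_comp hi hS)),
    card_perm_comp_eq _ _ fun b => by
      rw [card_compare_eq_compareCount, card_positionClass_eq_compareCount hi]]
  simp_rw [card_positionClass_eq_compareCount hi]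
  show ∏ b ∈ {.lt, .eq, .gt}, (compareCount n #S b)! = _
  simp [compareCount]

lemma before_subset_erase (i : Fin n) (σ : Equiv.Perm (Fin n)) : before i σ ⊆ univ.erase i :=
  fun _ hj => mem_erase.2 ⟨by rintro rfl; simp [before] at hj, mem_univ _⟩

lemma sum_perm_before {M : Type*} [AddCommMonoid M] (i : Fin n) (F : Finset (Fin n) → M) :
    ∑ σ : Equiv.Perm (Fin n), F (before i σ) =
      ∑ S ∈ (univ.erase i).powerset, ((#S)! * (n - 1 - #S)!) • F S := by
  rw [← sum_fiberwise_of_maps_to fun σ _ => mem_powerset.2 (before_subset_erase i σ)]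
  refine sum_congr rfl fun S hS => ?_
  have hi : i ∉ S := fun h => by simpa using mem_powerset.1 hS h
  rw [sum_congr rfl fun σ hσ => by rw [(mem_filter.1 hσ).2], sum_const, card_filter_before_eq hi]

def scaledMarginal (v : Finset (Fin n) → ℝ) (i : Fin n) (σ : Equiv.Perm (Fin n)) : ℝ :=
  n ! * (v (insert i (before i σ)) - v (before i σ))

lemma expect_scaledMarginal (v : Finset (Fin n) → ℝ) (i : Fin n) :
    𝔼 σ, scaledMarginal v i σ = rawShapley univ v i := by
  rw [Fintype.expect_eq_sum_div_card, Fintype.card_perm, Fintype.card_fin]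
  simp only [scaledMarginal]
  rw [← mul_sum, mul_div_cancel_left₀ _ (by positivity),
    sum_perm_before i fun S => v (insert i S) - v S, rawShapley, Finset.card_univ,
    Fintype.card_fin]
  refine sum_congr rfl fun S _ => ?_
  rw [nsmul_eq_mul, Nat.sub_right_comm]
  push_cast
  ring

lemma scaledMarginal_matchVal_nonneg (E : Finset (Sym2 (Fin n))) (w : Sym2 (Fin n) → ℝ)
    (i : Fin n) (σ : Equiv.Perm (Fin n)) : 0 ≤ scaledMarginal (matchVal E w) i σ :=
  mul_nonneg (by positivity) (sub_nonneg.2 (matchVal_mono E w (subset_insert _ _)))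

lemma scaledMarginal_matchVal_le {E : Finset (Sym2 (Fin n))} (w : Sym2 (Fin n) → ℝ) {i : Fin n}
    {W : ℝ} (hW0 : 0 ≤ W) (hW : ∀ e ∈ E, i ∈ e → w e ≤ W) (σ : Equiv.Perm (Fin n)) :
    scaledMarginal (matchVal E w) i σ ≤ n ! * W :=
  mul_le_mul_of_nonneg_left (matchVal_insert_sub_le E w hW0 hW _) (by positivity)

end Before

section Sampling

variable {X : Type*} [Fintype X]

lemma sum_mul_comp_apply {ι : Type*} [Fintype ι] [DecidableEq ι] (h : X → ℝ)
    (h0 : ∑ x, h x = 0) (j k : ι) :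
    ∑ f : ι → X, h (f j) * h (f k) =
      if j = k then Fintype.card X ^ (Fintype.card ι - 1) * ∑ x, h x ^ 2 else 0 := by
  rw [← (Equiv.funSplitAt j X).symm.sum_comp, Fintype.sum_prod_type]
  split_ifs with hjk
  · subst hjk
    simp [Fintype.card_subtype_compl, sq, mul_sum]
  · simp [Ne.symm hjk, ← mul_sum, ← sum_mul, h0]

lemma sum_sq_sum_comp {ι : Type*} [Fintype ι] [DecidableEq ι] (h : X → ℝ) (h0 : ∑ x, h x = 0) :
    ∑ f : ι → X, (∑ j, h (f j)) ^ 2 =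
      Fintype.card ι * Fintype.card X ^ (Fintype.card ι - 1) * ∑ x, h x ^ 2 := by
  calc _ = ∑ j, ∑ k, ∑ f : ι → X, h (f j) * h (f k) := by
        simp only [sq, sum_mul_sum]
        rw [sum_comm]
        exact sum_congr rfl fun j _ => sum_comm
    _ = _ := by simp [sum_mul_comp_apply h h0, mul_assoc]

lemma card_filter_le_abs_mul_sq_le_sum_sq {α : Type*} (s : Finset α) (Y : α → ℝ) {t : ℝ}
    (ht : 0 ≤ t) : #{a ∈ s | t ≤ |Y a|} * t ^ 2 ≤ ∑ a ∈ s, Y a ^ 2 :=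
  calc #{a ∈ s | t ≤ |Y a|} * t ^ 2 = ∑ a ∈ s with t ≤ |Y a|, t ^ 2 := by
        rw [sum_const, nsmul_eq_mul]
    _ ≤ ∑ a ∈ s with t ≤ |Y a|, Y a ^ 2 :=
        sum_le_sum fun a ha => sq_abs (Y a) ▸ pow_le_pow_left₀ ht (mem_filter.1 ha).2 2
    _ ≤ ∑ a ∈ s, Y a ^ 2 :=
        sum_le_sum_of_subset_of_nonneg (filter_subset _ _) fun _ _ _ => sq_nonneg _

lemma card_filter_le_abs_sampleMean_sub_expect_div_card_le [Nonempty X] (g : X → ℝ) {m : ℕ}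
    (hm : 0 < m) {t : ℝ} (ht : 0 < t) :
    (#{f : Fin m → X | t ≤ |1 / (m : ℝ) * ∑ j, g (f j) - 𝔼 x, g x|} : ℝ) /
        Fintype.card (Fin m → X) ≤ (𝔼 x, (g x - 𝔼 y, g y) ^ 2) / (m * t ^ 2) := by
  set μ := 𝔼 x, g x
  set C : ℝ := (Fintype.card X : ℝ)
  have hC : 0 < C := by simp [C, Fintype.card_pos]
  have hsum : ∑ x, (g x - μ) = 0 := by
    rw [← Fintype.card_mul_expect, Finset.expect_sub_distrib, Fintype.expect_const, sub_self,
      mul_zero]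
  have hdev : ∀ f : Fin m → X,
      1 / (m : ℝ) * ∑ j, g (f j) - μ = 1 / (m : ℝ) * ∑ j, (g (f j) - μ) := fun f => by
    rw [sum_sub_distrib, sum_const, card_univ, Fintype.card_fin, nsmul_eq_mul]
    field_simp
  have hmarkov := card_filter_le_abs_mul_sq_le_sum_sq univ
    (fun f : Fin m → X => 1 / (m : ℝ) * ∑ j, g (f j) - μ) ht.le
  simp_rw [hdev, mul_pow, ← mul_sum] at hmarkov
  rw [sum_sq_sum_comp (fun x => g x - μ) hsum, Fintype.card_fin] at hmarkov
  rw [Fintype.card_fun, Fintype.card_fin, Nat.cast_pow, div_le_div_iff₀ (by positivity)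
    (by positivity), Fintype.expect_eq_sum_div_card]
  simp_rw [hdev]
  have hm' : (0 : ℝ) < m := by exact_mod_cast hm
  refine le_of_le_of_eq (mul_left_comm _ (m : ℝ) _ ▸ mul_le_mul_of_nonneg_left hmarkov hm'.le) ?_
  rw [← mul_pow_sub_one hm.ne' C]
  field_simp
  ring

lemma expect_sq_sub_expect_le_mul_expect [Nonempty X] {g : X → ℝ}
    {B : ℝ} (hg0 : ∀ x, 0 ≤ g x) (hgB : ∀ x, g x ≤ B) :
    𝔼 x, (g x - 𝔼 y, g y) ^ 2 ≤ B * 𝔼 x, g x := by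
  set μ := 𝔼 x, g x
  calc 𝔼 x, (g x - μ) ^ 2 ≤ 𝔼 x, (B * g x - 2 * μ * g x + μ ^ 2) :=
        expect_le_expect fun x _ => by nlinarith [hg0 x, hgB x]
    _ = B * μ - μ ^ 2 := by
        rw [expect_add_distrib, expect_sub_distrib, ← mul_expect, ← mul_expect,
          Fintype.expect_const]
        ring
    _ ≤ B * μ := sub_le_self _ (sq_nonneg μ)

end Sampling

lemma cast_factorial_eq_mul_mul_factorial_sub_two {n : ℕ} (hn : 2 ≤ n) :
    (n ! : ℝ) = n * (n - 1) * (n - 2)! := by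
  obtain ⟨k, rfl⟩ := Nat.exists_eq_add_of_le' hn
  simp only [Nat.factorial_succ, Nat.add_sub_cancel]
  push_cast
  ring

lemma one_le_mul_sub_one {n : ℕ} (hn : 2 ≤ n) : (1 : ℝ) ≤ n * (n - 1) := by
  have : (2 : ℝ) ≤ n := by exact_mod_cast hn
  nlinarith

lemma div_mul_sq_le_quarter {a ε m : ℝ} (ha : 1 ≤ a) (hm : 4 * a ^ 2 / ε ^ 2 ≤ m) (hε : 0 < ε) :
    a / (m * ε ^ 2) ≤ 1 / 4 := by
  rw [div_le_iff₀ (by positivity)] at hm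
  rw [div_le_div_iff₀ (by nlinarith) (by norm_num)]
  nlinarith

theorem sampling_concentration_general (n : ℕ) (hn : 2 ≤ n)
    (E : Finset (Sym2 (Fin n))) (w : Sym2 (Fin n) → ℝ)
    (hloop : ∀ e ∈ E, ¬ e.IsDiag)
    (i : Fin n) (hinc : ∃ e ∈ E, i ∈ e ∧ 0 < w e)
    (κ : ℝ) (hκ : κ = rawShapley Finset.univ (matchVal E w) i)
    (ε : ℝ) (hε : 0 < ε)
    (m : ℕ) (hm : m = ⌈4 * (n : ℝ) ^ 2 * ((n : ℝ) - 1) ^ 2 / ε ^ 2⌉₊)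
    (estimate : (Fin m → Equiv.Perm (Fin n)) → ℝ)
    (hest : ∀ f, estimate f = (1 / (m : ℝ)) * ∑ j : Fin m, (Nat.factorial n : ℝ) *
      (matchVal E w (insert i (before i (f j))) - matchVal E w (before i (f j)))) :
    (((Finset.univ.filter
        (fun f : Fin m → Equiv.Perm (Fin n) => ε * κ ≤ |estimate f - κ|)).card : ℝ) /
      (Fintype.card (Fin m → Equiv.Perm (Fin n)) : ℝ)) ≤ 1 / 4 := by
  obtain ⟨j, hij, hE, hW0, hW⟩ := exists_max_weight_incident w hloop hinc
  have hmean : 𝔼 σ, scaledMarginal (matchVal E w) i σ = κ := hκ ▸ expect_scaledMarginal _ i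
  have hκW : ((n - 2)! : ℝ) * w s(i, j) ≤ κ := by
    simpa [hκ] using factorial_mul_le_rawShapley_matchVal w (mem_univ j) hij hE
  have hκ0 : 0 < κ := lt_of_lt_of_le (by positivity) hκW
  have ha := one_le_mul_sub_one hn
  have hB : (n ! : ℝ) * w s(i, j) ≤ n * (n - 1) * κ := by
    rw [cast_factorial_eq_mul_mul_factorial_sub_two hn, mul_assoc]
    exact mul_le_mul_of_nonneg_left hκW (by positivity)
  have hvar : 𝔼 σ, (scaledMarginal (matchVal E w) i σ - κ) ^ 2 ≤ n * (n - 1) * κ * κ := by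
    rw [← hmean]
    exact expect_sq_sub_expect_le_mul_expect (scaledMarginal_matchVal_nonneg E w i)
      fun σ => (scaledMarginal_matchVal_le w hW0.le hW σ).trans (hmean ▸ hB)
  have hsize : 4 * ((n : ℝ) * (n - 1)) ^ 2 / ε ^ 2 ≤ m := by
    rw [hm, mul_pow, ← mul_assoc]
    exact Nat.le_ceil _
  have hm0 : 0 < m := by exact_mod_cast (div_pos (by positivity) (by positivity)).trans_le hsize
  simp only [hest]
  calc _ ≤ _ := hmean ▸
        card_filter_le_abs_sampleMean_sub_expect_div_card_le _ hm0 (mul_pos hε hκ0)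
    _ ≤ n * (n - 1) * κ * κ / (m * (ε * κ) ^ 2) := by gcongr
    _ = n * (n - 1) / (m * ε ^ 2) := by field_simp
    _ ≤ 1 / 4 := div_mul_sq_le_quarter ha hsize hε

/-- Sampling `m = ⌈4 n² (n-1)² / ε²⌉` independent uniformly random
permutations and averaging `n!` times the marginal contribution of `i` yields, with probability
at least `3/4`, an estimate within a multiplicative factor `ε` of `κ_i`. -/
theorem sampling_concentration (n : ℕ) (hn : 2 ≤ n)
    (E : Finset (Sym2 (Fin n))) (w : Sym2 (Fin n) → ℝ)
    (hloop : ∀ e ∈ E, ¬ e.IsDiag) (hw : ∀ e ∈ E, 0 ≤ w e)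
    (i : Fin n) (hinc : ∃ e ∈ E, i ∈ e ∧ 0 < w e)
    (κ : ℝ) (hκ : κ = rawShapley Finset.univ (matchVal E w) i)
    (ε : ℝ) (hε : 0 < ε)
    (m : ℕ) (hm : m = ⌈4 * (n : ℝ) ^ 2 * ((n : ℝ) - 1) ^ 2 / ε ^ 2⌉₊)
    (estimate : (Fin m → Equiv.Perm (Fin n)) → ℝ)
    (hest : ∀ f, estimate f = (1 / (m : ℝ)) * ∑ j : Fin m, (Nat.factorial n : ℝ) *
      (matchVal E w (insert i (before i (f j))) - matchVal E w (before i (f j)))) :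
    (((Finset.univ.filter
        (fun f : Fin m → Equiv.Perm (Fin n) => ε * κ ≤ |estimate f - κ|)).card : ℝ) /
      (Fintype.card (Fin m → Equiv.Perm (Fin n)) : ℝ)) ≤ 1 / 4 :=
  sampling_concentration_general n hn E w hloop i hinc κ hκ ε hε m hm estimate hest
end
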